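/- arXiv:1001.2916 — 2 statements merged into one kernel-verified Lean document; each statement's English description precedes it below -/
import Mathlib

section
/- Let α>0 and ε>0. Let Z be a nonnegative random variable with P(Z>z)=z^{-α}ℓ(z) for all z>0, where ℓ is slowly varying at infinity. Let σ:ℝ→[0,∞) be measurable and let X be a random variable independent of Z with E[σ(X)^{α+ε}]<∞. Let (u_n) be a sequence with u_n→∞ and define G_n(x,s)=P(σ(x)Z>(1+s)u_n)/P(Z>u_n) for x∈ℝ, s≥0, and T(s)=(1+s)^{-α}. Then for every p≥1 such that pα<α+ε, lim_{n→∞} E[ sup_{s≥0} |G_n(X,s) − σ(X)^α T(s)|^p ] = 0. -/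
open MeasureTheory ProbabilityTheory Filter

noncomputable section

/-- A measurable function `ℓ : (0,∞) → (0,∞)` is slowly varying at infinity if
`ℓ(tx)/ℓ(t) → 1` as `t → ∞` for every `x > 0`. -/
def SlowlyVarying (ℓ : ℝ → ℝ) : Prop :=
  Measurable ℓ ∧ (∀ t > 0, 0 < ℓ t) ∧
    ∀ x > (0:ℝ), Tendsto (fun t => ℓ (t * x) / ℓ t) atTop (nhds 1)

open Set Topology

/-!
Write `g z = P(Z > z)`. Then `G_n(x, s) = g ((1 + s) u_n / σ x) / g u_n`, so the integrand is a
deterministic function of `σ(X)`: with `c = 1 / σ(X)` it is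
`sup_{x ≥ c} |g (u_n x) / g u_n - x ^ (-α)| ^ p`. For fixed `c > 0` this tends to `0` by the
uniform convergence theorem for regularly varying functions, and once `u_n` is large Potter's
bound `g (t / y) ≤ C max(1, y) ^ β g t`, with `pβ = α + ε`, dominates it by
`C' (1 + σ(X) ^ (α + ε))`. Dominated convergence concludes.
-/

lemma abs_sub_le_of_sandwich {u v u₁ u₂ v₁ v₂ η : ℝ} (hu : u ∈ Icc u₁ u₂) (hv : v ∈ Icc v₁ v₂)
    (h₁ : |u₁ - v₁| ≤ η) (h₂ : |u₂ - v₂| ≤ η) (hv₁₂ : v₂ - v₁ ≤ η) : |u - v| ≤ 2 * η := by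
  rw [abs_le] at h₁ h₂ ⊢
  constructor <;> linarith [hu.1, hu.2, hv.1, hv.2]

lemma exists_one_lt_rpow_neg_mul_sub_le (α c : ℝ) {η : ℝ} (hη : 0 < η) :
    ∃ q > 1, c ^ (-α) * (1 - q ^ (-α)) ≤ η := by
  have hcont : ContinuousAt (fun q : ℝ => c ^ (-α) * (1 - q ^ (-α))) 1 :=
    continuousAt_const.mul
      (continuousAt_const.sub (Real.continuousAt_rpow_const _ _ (Or.inl one_ne_zero)))
  have hlt : ∀ᶠ q in 𝓝 1, c ^ (-α) * (1 - q ^ (-α)) < η :=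
    hcont.eventually (eventually_lt_nhds (by simpa using hη))
  obtain ⟨q, hq, hq1⟩ := ((hlt.filter_mono nhdsWithin_le_nhds).and
    (self_mem_nhdsWithin : Ioi (1 : ℝ) ∈ 𝓝[>] 1)).exists
  exact ⟨q, hq1, hq.le⟩

lemma rpow_neg_sub_rpow_neg_le {α c q : ℝ} (hα : 0 ≤ α) (hc : 0 < c) (hq : 1 ≤ q) (n : ℕ) :
    (c * q ^ n) ^ (-α) - (c * q ^ (n + 1)) ^ (-α) ≤ c ^ (-α) * (1 - q ^ (-α)) := by
  have hq0 : 0 < q := one_pos.trans_le hq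
  have hcq : c ≤ c * q ^ n := le_mul_of_one_le_right hc.le (one_le_pow₀ hq)
  rw [pow_succ, ← mul_assoc, Real.mul_rpow (by positivity) hq0.le, ← mul_one_sub]
  exact mul_le_mul_of_nonneg_right (Real.rpow_le_rpow_of_nonpos hc hcq (neg_nonpos.2 hα))
    (sub_nonneg.2 (Real.rpow_le_one_of_one_le_of_nonpos hq (neg_nonpos.2 hα)))

lemma max_one_rpow_le {y : ℝ} (hy : 0 ≤ y) (γ : ℝ) : max 1 y ^ γ ≤ 1 + y ^ γ := by
  rcases le_total y 1 with h | h
  · rw [max_eq_left h, Real.one_rpow]; linarith [Real.rpow_nonneg hy γ]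
  · rw [max_eq_right h]; linarith

lemma le_pow_mul_of_le_mul_two {g : ℝ → ℝ} {t₀ B : ℝ} (hB : 0 ≤ B) (ht₀ : 0 ≤ t₀)
    (h : ∀ s ≥ t₀, g s ≤ B * g (2 * s)) (k : ℕ) {s : ℝ} (hs : t₀ ≤ s) :
    g s ≤ B ^ k * g (2 ^ k * s) := by
  induction k generalizing s with
  | zero => simp
  | succ k ih =>
    calc g s ≤ B * g (2 * s) := h s hs
      _ ≤ B * (B ^ k * g (2 ^ k * (2 * s))) :=
          mul_le_mul_of_nonneg_left (ih (by linarith)) hB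
      _ = B ^ (k + 1) * g (2 ^ (k + 1) * s) := by ring_nf

lemma Antitone.le_rpow_mul_of_le_mul_two {g : ℝ → ℝ} (hg : Antitone g) (hg0 : ∀ z, 0 ≤ g z)
    {t₀ β : ℝ} (hβ : 0 ≤ β) (ht₀ : 0 ≤ t₀) (h : ∀ s ≥ t₀, g s ≤ 2 ^ β * g (2 * s))
    {s l : ℝ} (hs : t₀ ≤ s) (hl : 1 ≤ l) : g s ≤ (2 * l) ^ β * g (l * s) := by
  obtain ⟨k, hkl, hlk⟩ := exists_nat_pow_near hl one_lt_two
  have hs0 : 0 ≤ s := ht₀.trans hs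
  have hpow : ((2 : ℝ) ^ β) ^ (k + 1) ≤ (2 * l) ^ β := by
    rw [← Real.rpow_mul_natCast zero_le_two, mul_comm, Real.rpow_natCast_mul zero_le_two]
    exact Real.rpow_le_rpow (by positivity) (by rw [pow_succ']; linarith) hβ
  calc g s ≤ (2 ^ β) ^ (k + 1) * g (2 ^ (k + 1) * s) :=
        le_pow_mul_of_le_mul_two (by positivity) ht₀ h (k + 1) hs
    _ ≤ (2 * l) ^ β * g (l * s) :=
        mul_le_mul hpow (hg (mul_le_mul_of_nonneg_right hlk.le hs0)) (hg0 _) (by positivity)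

/-- The properties of the survival function `z ↦ P(Z > z)` of a law whose tail is regularly
varying of index `-α`. -/
structure RegularlyVaryingTail (g : ℝ → ℝ) (α : ℝ) : Prop where
  antitone : Antitone g
  nonneg : ∀ z, 0 ≤ g z
  le_one : ∀ z, g z ≤ 1
  pos : ∀ z, 0 < z → 0 < g z
  tendsto_div : ∀ x, 0 < x → Tendsto (fun t => g (t * x) / g t) atTop (𝓝 (x ^ (-α)))

/-- For `c = y⁻¹` the substitution `x = (1 + s) / y` turns this into
`⨆ s ≥ 0, |g ((1 + s) t / y) / g t - y ^ α (1 + s) ^ (-α)| ^ p`. -/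
def tailDev (g : ℝ → ℝ) (α p t c : ℝ) : ℝ :=
  ⨆ x : Ici c, |g (t * x) / g t - (x : ℝ) ^ (-α)| ^ p

def tailDevAt (g : ℝ → ℝ) (α p t y : ℝ) : ℝ :=
  if 0 < y then tailDev g α p t y⁻¹ else 0

lemma tailDev_nonneg (g : ℝ → ℝ) (α p t c : ℝ) : 0 ≤ tailDev g α p t c :=
  Real.iSup_nonneg fun _ => Real.rpow_nonneg (abs_nonneg _) p

lemma tailDevAt_nonneg (g : ℝ → ℝ) (α p t y : ℝ) : 0 ≤ tailDevAt g α p t y := by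
  unfold tailDevAt
  split_ifs
  exacts [tailDev_nonneg .., le_rfl]

namespace RegularlyVaryingTail

variable {g : ℝ → ℝ} {α : ℝ}

lemma div_antitone (hg : RegularlyVaryingTail g α) {t : ℝ} (ht : 0 ≤ t) :
    Antitone fun x => g (t * x) / g t := fun _ _ hxy =>
  div_le_div_of_nonneg_right (hg.antitone (mul_le_mul_of_nonneg_left hxy ht)) (hg.nonneg t)

lemma exists_le_mul_two (hg : RegularlyVaryingTail g α) {β : ℝ} (hβ : α < β) :
    ∃ t₀ > 0, ∀ s ≥ t₀, g s ≤ 2 ^ β * g (2 * s) := by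
  have hlt : (2 : ℝ) ^ (-β) < 2 ^ (-α) :=
    Real.rpow_lt_rpow_of_exponent_lt one_lt_two (neg_lt_neg hβ)
  obtain ⟨t₀, ht₀⟩ := eventually_atTop.mp
    (((hg.tendsto_div 2 two_pos).eventually (eventually_gt_nhds hlt)).and
      (eventually_gt_atTop 0))
  refine ⟨max t₀ 1, by positivity, fun s hs => ?_⟩
  obtain ⟨hratio, hs0⟩ := ht₀ s (le_of_max_le_left hs)
  rw [lt_div_iff₀ (hg.pos s hs0), Real.rpow_neg zero_le_two, mul_comm s] at hratio
  have h2β : (0 : ℝ) < 2 ^ β := by positivity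
  rw [inv_mul_lt_iff₀ h2β] at hratio
  exact hratio.le

/-- Potter's bound, by iterating the doubling inequality from `t / y` up to `t`; when
`t / y < t₀` one iterates from `t₀` instead and uses `g (t / y) ≤ 1`. -/
lemma le_rpow_div_mul (hg : RegularlyVaryingTail g α) {t₀ β : ℝ} (hβ : 0 ≤ β) (ht₀ : 0 < t₀)
    (h : ∀ s ≥ t₀, g s ≤ 2 ^ β * g (2 * s)) {t y : ℝ} (ht : t₀ ≤ t) (hy : 0 < y) :
    g (t / y) ≤ (2 * max 1 y) ^ β / g t₀ * g t := by
  have hg₀ := hg.pos t₀ ht₀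
  have ht0 : 0 < t := ht₀.trans_le ht
  have hC : 1 ≤ (2 * max 1 y) ^ β / g t₀ := by
    rw [le_div_iff₀ hg₀, one_mul]
    exact (hg.le_one t₀).trans (Real.one_le_rpow (by linarith [le_max_left 1 y]) hβ)
  rcases le_or_gt y 1 with hy1 | hy1
  · have : g (t / y) ≤ g t := hg.antitone (le_div_self ht0.le hy hy1)
    exact this.trans (le_mul_of_one_le_left (hg.nonneg t) hC)
  rw [max_eq_right hy1.le, div_mul_eq_mul_div]
  rcases le_or_gt t₀ (t / y) with hty | hty
  · have := hg.antitone.le_rpow_mul_of_le_mul_two hg.nonneg hβ ht₀.le h hty hy1.le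
    rw [mul_div_cancel₀ t hy.ne'] at this
    exact this.trans (le_div_self (mul_nonneg (by positivity) (hg.nonneg t)) hg₀ (hg.le_one t₀))
  · have hl : 1 ≤ t / t₀ := (one_le_div ht₀).mpr ht
    have := hg.antitone.le_rpow_mul_of_le_mul_two hg.nonneg hβ ht₀.le h le_rfl hl
    rw [div_mul_cancel₀ t ht₀.ne'] at this
    have hty' : t / t₀ ≤ y := by rw [div_lt_iff₀ hy] at hty; rw [div_le_iff₀ ht₀]; linarith
    rw [le_div_iff₀ hg₀]
    calc g (t / y) * g t₀ ≤ 1 * ((2 * (t / t₀)) ^ β * g t) :=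
          mul_le_mul (hg.le_one _) this hg₀.le zero_le_one
      _ ≤ (2 * y) ^ β * g t := by
          rw [one_mul]; gcongr; exact hg.nonneg t

/-- Uniform convergence theorem. Both sides are antitone in `x`, so it suffices to control them
on a finite geometric grid `c * q ^ i`, beyond whose last point both are small. -/
lemma eventually_forall_abs_div_sub_rpow_le (hg : RegularlyVaryingTail g α) (hα : 0 < α)
    {c η : ℝ} (hc : 0 < c) (hη : 0 < η) :
    ∀ᶠ t in atTop, ∀ x ≥ c, |g (t * x) / g t - x ^ (-α)| ≤ η := by
  obtain ⟨q, hq1, hgap⟩ := exists_one_lt_rpow_neg_mul_sub_le α c (half_pos hη)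
  set a : ℕ → ℝ := fun i => c * q ^ i
  have ha0 : ∀ i, 0 < a i := fun i => mul_pos hc (pow_pos (one_pos.trans hq1) i)
  obtain ⟨N, hN⟩ : ∃ N, a N ^ (-α) ≤ η / 2 :=
    (((tendsto_rpow_neg_atTop hα).comp
      ((tendsto_pow_atTop_atTop_of_one_lt hq1).const_mul_atTop hc)).eventually
        (eventually_le_nhds (half_pos hη))).exists
  have hgrid : ∀ᶠ t in atTop, ∀ i ∈ Finset.range (N + 1),
      |g (t * a i) / g t - a i ^ (-α)| ≤ η / 2 := by
    refine (Filter.eventually_all_finset _).2 fun i _ => ?_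
    filter_upwards [Metric.tendsto_nhds.1 (hg.tendsto_div _ (ha0 i)) _ (half_pos hη)] with t ht
    exact (Real.dist_eq _ _ ▸ ht).le
  filter_upwards [hgrid, eventually_ge_atTop 0] with t ht ht0 x hx
  have hr := hg.div_antitone ht0
  have hφ : ∀ {z w : ℝ}, 0 < z → z ≤ w → w ^ (-α) ≤ z ^ (-α) := fun hz hzw =>
    Real.rpow_le_rpow_of_nonpos hz hzw (by linarith)
  obtain ⟨n, hn, hn'⟩ := exists_nat_pow_near ((one_le_div hc).2 hx) hq1
  rw [le_div_iff₀' hc] at hn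
  rw [div_lt_iff₀' hc] at hn'
  rw [← add_halves η, ← two_mul]
  rcases lt_or_ge n N with hnN | hNn
  · exact abs_sub_le_of_sandwich ⟨hr hn'.le, hr hn⟩ ⟨hφ (hc.trans_le hx) hn'.le, hφ (ha0 n) hn⟩
      (ht _ (Finset.mem_range.2 (by omega))) (ht _ (Finset.mem_range.2 (by omega)))
      (rpow_neg_sub_rpow_neg_le hα.le hc hq1.le n |>.trans hgap)
  · have hNx : a N ≤ x := (mul_le_mul_of_nonneg_left (pow_le_pow_right₀ hq1.le hNn) hc.le).trans hn
    refine abs_sub_le_of_sandwich (u₁ := 0) (v₁ := 0)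
      ⟨div_nonneg (hg.nonneg _) (hg.nonneg _), hr hNx⟩
      ⟨Real.rpow_nonneg (hc.le.trans hx) _, hφ (ha0 N) hNx⟩ (by rw [sub_zero, abs_zero]; positivity)
      (ht N (Finset.self_mem_range_succ N)) (by rwa [sub_zero])

lemma abs_div_sub_rpow_le (hg : RegularlyVaryingTail g α) (hα : 0 ≤ α) {t c x : ℝ}
    (ht : 0 ≤ t) (hc : 0 < c) (hx : c ≤ x) :
    |g (t * x) / g t - x ^ (-α)| ≤ g (t * c) / g t + c ^ (-α) := by
  have hr0 : 0 ≤ g (t * c) / g t := div_nonneg (hg.nonneg _) (hg.nonneg _)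
  have hφ0 : 0 ≤ c ^ (-α) := Real.rpow_nonneg hc.le _
  exact abs_sub_le_of_nonneg_of_le (div_nonneg (hg.nonneg _) (hg.nonneg _))
    ((hg.div_antitone ht hx).trans (le_add_of_nonneg_right hφ0))
    (Real.rpow_nonneg (hc.le.trans hx) _)
    ((Real.rpow_le_rpow_of_nonpos hc hx (neg_nonpos.2 hα)).trans (le_add_of_nonneg_left hr0))

lemma tailDev_le (hg : RegularlyVaryingTail g α) (hα : 0 ≤ α) {p t c : ℝ} (hp : 0 ≤ p)
    (ht : 0 ≤ t) (hc : 0 < c) : tailDev g α p t c ≤ (g (t * c) / g t + c ^ (-α)) ^ p :=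
  ciSup_le fun x => Real.rpow_le_rpow (abs_nonneg _) (hg.abs_div_sub_rpow_le hα ht hc x.2) hp

lemma bddAbove_tailDev (hg : RegularlyVaryingTail g α) (hα : 0 ≤ α) {p t c : ℝ} (hp : 0 ≤ p)
    (ht : 0 ≤ t) (hc : 0 < c) :
    BddAbove (range fun x : Ici c => |g (t * x) / g t - (x : ℝ) ^ (-α)| ^ p) :=
  ⟨_, forall_mem_range.2 fun x =>
    Real.rpow_le_rpow (abs_nonneg _) (hg.abs_div_sub_rpow_le hα ht hc x.2) hp⟩

lemma tailDev_anti (hg : RegularlyVaryingTail g α) (hα : 0 ≤ α) {p t c c' : ℝ} (hp : 0 ≤ p)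
    (ht : 0 ≤ t) (hc : 0 < c) (hcc' : c ≤ c') : tailDev g α p t c' ≤ tailDev g α p t c :=
  ciSup_le fun x => le_ciSup_of_le (hg.bddAbove_tailDev hα hp ht hc) ⟨x, hcc'.trans x.2⟩ le_rfl

lemma tailDevAt_monotone (hg : RegularlyVaryingTail g α) (hα : 0 ≤ α) {p t : ℝ} (hp : 0 ≤ p)
    (ht : 0 ≤ t) : Monotone (tailDevAt g α p t) := by
  intro y y' hyy'
  by_cases hy : 0 < y
  · rw [tailDevAt, tailDevAt, if_pos hy, if_pos (hy.trans_le hyy')]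
    exact hg.tailDev_anti hα hp ht (inv_pos.2 (hy.trans_le hyy')) (inv_anti₀ hy hyy')
  · rw [tailDevAt, if_neg hy]
    exact tailDevAt_nonneg ..

lemma tendsto_tailDev (hg : RegularlyVaryingTail g α) (hα : 0 < α) {p c : ℝ} (hp : 0 < p)
    (hc : 0 < c) : Tendsto (fun t => tailDev g α p t c) atTop (𝓝 0) := by
  refine Metric.tendsto_nhds.2 fun δ hδ => ?_
  have hη : 0 < (δ / 2) ^ p⁻¹ := Real.rpow_pos_of_pos (half_pos hδ) _
  filter_upwards [hg.eventually_forall_abs_div_sub_rpow_le hα hc hη] with t ht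
  have hle : tailDev g α p t c ≤ δ / 2 := by
    refine ciSup_le fun x => ?_
    calc |g (t * x) / g t - (x : ℝ) ^ (-α)| ^ p ≤ ((δ / 2) ^ p⁻¹) ^ p :=
          Real.rpow_le_rpow (abs_nonneg _) (ht x x.2) hp.le
      _ = δ / 2 := Real.rpow_inv_rpow (half_pos hδ).le hp.ne'
  rw [Real.dist_eq, sub_zero, abs_of_nonneg (tailDev_nonneg ..)]
  linarith

lemma tendsto_tailDevAt (hg : RegularlyVaryingTail g α) (hα : 0 < α) {p : ℝ} (hp : 0 < p)
    (y : ℝ) : Tendsto (fun t => tailDevAt g α p t y) atTop (𝓝 0) := by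
  by_cases hy : 0 < y
  · simpa only [tailDevAt, if_pos hy] using hg.tendsto_tailDev hα hp (inv_pos.2 hy)
  · simpa only [tailDevAt, if_neg hy] using tendsto_const_nhds

lemma exists_tailDevAt_le (hg : RegularlyVaryingTail g α) (hα : 0 ≤ α) {p γ : ℝ} (hp : 0 < p)
    (hpγ : p * α < γ) : ∃ K t₀, ∀ t ≥ t₀, ∀ y ≥ 0, tailDevAt g α p t y ≤ K * (1 + y ^ γ) := by
  set β := γ / p
  have hβ : α < β := (lt_div_iff₀' hp).2 hpγ
  obtain ⟨t₀, ht₀, hdouble⟩ := hg.exists_le_mul_two hβ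
  set C := 2 ^ β / g t₀ + 1
  have hC : 0 ≤ C := add_nonneg (div_nonneg (by positivity) (hg.nonneg _)) zero_le_one
  refine ⟨C ^ p, t₀, fun t ht y hy => ?_⟩
  have hK : 0 ≤ C ^ p * (1 + y ^ γ) := by positivity
  by_cases hy0 : 0 < y
  swap
  · simpa only [tailDevAt, if_neg hy0] using hK
  rw [tailDevAt, if_pos hy0]
  have ht0 : 0 < t := ht₀.trans_le ht
  set m := max 1 y
  have hm : 1 ≤ m := le_max_left 1 y
  have hratio : g (t * y⁻¹) / g t ≤ 2 ^ β / g t₀ * m ^ β := by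
    rw [div_le_iff₀ (hg.pos t ht0), ← div_eq_mul_inv]
    have := hg.le_rpow_div_mul (by linarith) ht₀ hdouble ht hy0
    rwa [Real.mul_rpow zero_le_two (by linarith), mul_div_right_comm] at this
  have hyα : y⁻¹ ^ (-α) ≤ m ^ β := by
    rw [Real.inv_rpow hy, Real.rpow_neg hy, inv_inv]
    exact (Real.rpow_le_rpow hy (le_max_right 1 y) hα).trans
      (Real.rpow_le_rpow_of_exponent_le hm hβ.le)
  calc tailDev g α p t y⁻¹ ≤ (g (t * y⁻¹) / g t + y⁻¹ ^ (-α)) ^ p :=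
        hg.tailDev_le hα hp.le ht0.le (inv_pos.2 hy0)
    _ ≤ (C * m ^ β) ^ p := by
        refine Real.rpow_le_rpow (add_nonneg (div_nonneg (hg.nonneg _) (hg.nonneg _))
          (Real.rpow_nonneg (inv_nonneg.2 hy) _)) ?_ hp.le
        linarith
    _ = C ^ p * m ^ γ := by
        rw [Real.mul_rpow hC (by positivity), ← Real.rpow_mul (by positivity),
          div_mul_cancel₀ γ hp.ne']
    _ ≤ C ^ p * (1 + y ^ γ) := by gcongr; exact max_one_rpow_le hy γ

end RegularlyVaryingTail

lemma SlowlyVarying.regularlyVaryingTail {Ω : Type*} [MeasurableSpace Ω] {P : Measure Ω}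
    [IsProbabilityMeasure P] {Z : Ω → ℝ} {ℓ : ℝ → ℝ} {α : ℝ} (hℓ : SlowlyVarying ℓ)
    (htail : ∀ z > 0, (P {ω | Z ω > z}).toReal = z ^ (-α) * ℓ z) :
    RegularlyVaryingTail (fun z => (P {ω | Z ω > z}).toReal) α where
  antitone _ _ hzz' := ENNReal.toReal_mono (measure_ne_top _ _)
    (measure_mono fun _ hω => hzz'.trans_lt hω)
  nonneg _ := ENNReal.toReal_nonneg
  le_one _ := ENNReal.toReal_le_of_le_ofReal zero_le_one (by simpa using prob_le_one)
  pos z hz := by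
    simp only [htail z hz]
    exact mul_pos (Real.rpow_pos_of_pos hz _) (hℓ.2.1 z hz)
  tendsto_div x hx := by
    have h := (hℓ.2.2 x hx).const_mul (x ^ (-α))
    rw [mul_one] at h
    refine h.congr' ?_
    filter_upwards [eventually_gt_atTop 0] with t ht
    have := (hℓ.2.1 t ht).ne'
    have := (Real.rpow_pos_of_pos ht (-α)).ne'
    rw [htail _ (mul_pos ht hx), htail _ ht, Real.mul_rpow ht.le hx.le]
    field_simp

lemma tailDevAt_survival_eq_iSup {Ω : Type*} [MeasurableSpace Ω] (P : Measure Ω)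
    (Z : Ω → ℝ) {α p t y : ℝ} (hα : 0 < α) (hp : 0 < p) (ht : 0 < t) (hy : 0 ≤ y) :
    tailDevAt (fun z => (P {ω | Z ω > z}).toReal) α p t y
      = ⨆ s : {s : ℝ // 0 ≤ s}, |(P {ω | y * Z ω > (1 + s) * t}).toReal
          / (P {ω | Z ω > t}).toReal - y ^ α * (1 + s) ^ (-α)| ^ p := by
  unfold tailDevAt
  split_ifs with hy0
  · let f : {s : ℝ // 0 ≤ s} → Ici y⁻¹ := fun s =>
      ⟨(1 + s) / y, by
        rw [div_eq_mul_inv]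
        exact le_mul_of_one_le_left (inv_nonneg.2 hy) (le_add_of_nonneg_right s.2)⟩
    have hf : Function.Surjective f := fun x =>
      ⟨⟨x * y - 1, by have := (inv_le_iff_one_le_mul₀ hy0).1 x.2; linarith⟩,
        Subtype.ext (by simp [f, hy0.ne'])⟩
    rw [tailDev, ← hf.iSup_comp]
    symm
    refine iSup_congr fun s => ?_
    have hs : 0 < 1 + (s : ℝ) := by linarith [s.2]
    have hset : {ω | y * Z ω > (1 + s) * t} = {ω | Z ω > t * ((1 + s) / y)} := by
      ext ω
      rw [mem_ofPred_eq, mem_ofPred_eq, gt_iff_lt, gt_iff_lt, ← mul_div_assoc, div_lt_iff₀ hy0,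
        mul_comm t, mul_comm y]
    dsimp only [f]
    rw [hset, Real.div_rpow hs.le hy, Real.rpow_neg hy, div_inv_eq_mul, mul_comm (_ ^ (-α))]
  · obtain rfl : y = 0 := by linarith
    have hterm (s : {s : ℝ // 0 ≤ s}) : ¬ (1 + (s : ℝ)) * t < 0 :=
      not_lt.2 (mul_pos (by linarith [s.2]) ht).le
    simp [hterm, Real.zero_rpow hα.ne', Real.zero_rpow hp.ne']

theorem stmt_0_general (α ε : ℝ) (hα : 0 < α)
    {Ω : Type*} [MeasurableSpace Ω] (P : Measure Ω) [IsProbabilityMeasure P]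
    (Z : Ω → ℝ)
    (ℓ : ℝ → ℝ) (hℓ : SlowlyVarying ℓ)
    (htail : ∀ z > (0:ℝ), (P {ω | Z ω > z}).toReal = z ^ (-α) * ℓ z)
    (σ : ℝ → ℝ) (hσmeas : Measurable σ) (hσnn : ∀ x, 0 ≤ σ x)
    (X : Ω → ℝ) (hXmeas : Measurable X)
    (hmom : Integrable (fun ω => σ (X ω) ^ (α + ε)) P)
    (u : ℕ → ℝ) (hu : Tendsto u atTop atTop)
    (Gn : ℕ → ℝ → ℝ → ℝ)
    (hGn : ∀ n x s, Gn n x s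
      = (P {ω | σ x * Z ω > (1 + s) * u n}).toReal / (P {ω | Z ω > u n}).toReal)
    (T : ℝ → ℝ) (hT : ∀ s, T s = (1 + s) ^ (-α))
    (p : ℝ) (hp : 1 ≤ p) (hpα : p * α < α + ε) :
    Tendsto
      (fun n => ∫ ω, (⨆ s : {s : ℝ // 0 ≤ s},
        |Gn n (X ω) (s : ℝ) - σ (X ω) ^ α * T (s : ℝ)| ^ p) ∂P)
      atTop (nhds 0) := by
  set g := fun z => (P {ω | Z ω > z}).toReal
  have hg : RegularlyVaryingTail g α := hℓ.regularlyVaryingTail htail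
  have hp0 : 0 < p := one_pos.trans_le hp
  obtain ⟨K, t₀, hK⟩ := hg.exists_tailDevAt_le hα.le hp0 hpα
  have hY : Measurable fun ω => σ (X ω) := hσmeas.comp hXmeas
  have hlim : Tendsto (fun n => ∫ ω, tailDevAt g α p (u n) (σ (X ω)) ∂P) atTop (𝓝 0) := by
    simpa using tendsto_integral_filter_of_dominated_convergence
      (F := fun n ω => tailDevAt g α p (u n) (σ (X ω))) (fun ω => K * (1 + σ (X ω) ^ (α + ε)))
      ((hu.eventually_gt_atTop 0).mono fun n hn =>
        ((hg.tailDevAt_monotone hα.le hp0.le hn.le).measurable.comp hY).aestronglyMeasurable)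
      ((hu.eventually_ge_atTop t₀).mono fun n hn => ae_of_all _ fun ω => by
        rw [Real.norm_of_nonneg (tailDevAt_nonneg ..)]
        exact hK _ hn _ (hσnn _))
      (((integrable_const 1).add hmom).const_mul K)
      (ae_of_all _ fun ω => (hg.tendsto_tailDevAt hα hp0 _).comp hu)
  refine hlim.congr' ?_
  filter_upwards [hu.eventually_gt_atTop 0] with n hn
  refine integral_congr_ae (ae_of_all _ fun ω => ?_)
  simp only [hGn, hT]
  exact tailDevAt_survival_eq_iSup P Z hα hp0 hn (hσnn _)

/-- Uniform-in-`s` `L^p` convergence of `G_n(X,s) = P(σ(X)Z > (1+s)u_n)/P(Z > u_n)` to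
`σ(X)^α T(s)`, where `T(s) = (1+s)^{-α}`, for an r.v. `X` independent of `Z`, when
`Z` has a regularly varying tail with index `-α` and `E[σ(X)^{α+ε}] < ∞`. -/
theorem stmt_0 (α ε : ℝ) (hα : 0 < α) (hε : 0 < ε)
    {Ω : Type*} [MeasurableSpace Ω] (P : Measure Ω) [IsProbabilityMeasure P]
    (Z : Ω → ℝ) (hZmeas : Measurable Z) (hZnn : ∀ ω, 0 ≤ Z ω)
    (ℓ : ℝ → ℝ) (hℓ : SlowlyVarying ℓ)
    (htail : ∀ z > (0:ℝ), (P {ω | Z ω > z}).toReal = z ^ (-α) * ℓ z)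
    (σ : ℝ → ℝ) (hσmeas : Measurable σ) (hσnn : ∀ x, 0 ≤ σ x)
    (X : Ω → ℝ) (hXmeas : Measurable X) (hindep : IndepFun X Z P)
    (hmom : Integrable (fun ω => σ (X ω) ^ (α + ε)) P)
    (u : ℕ → ℝ) (hu : Tendsto u atTop atTop)
    (Gn : ℕ → ℝ → ℝ → ℝ)
    (hGn : ∀ n x s, Gn n x s
      = (P {ω | σ x * Z ω > (1 + s) * u n}).toReal / (P {ω | Z ω > u n}).toReal)
    (T : ℝ → ℝ) (hT : ∀ s, T s = (1 + s) ^ (-α))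
    (p : ℝ) (hp : 1 ≤ p) (hpα : p * α < α + ε) :
    Tendsto
      (fun n => ∫ ω, (⨆ s : {s : ℝ // 0 ≤ s},
        |Gn n (X ω) (s : ℝ) - σ (X ω) ^ α * T (s : ℝ)| ^ p) ∂P)
      atTop (nhds 0) :=
  stmt_0_general α ε hα P Z ℓ hℓ htail σ hσmeas hσnn X hXmeas hmom u hu Gn hGn T hT p hp hpα
end
end

section
/- Let α>0 and let Z₁, Z₂ be i.i.d. nonnegative random variables with common tail P(Z>z)=z^{-α}ℓ(z), ℓ slowly varying at infinity. Let (ξ₁,ξ₂) be a pair of nonnegative random variables, independent of (Z₁,Z₂), such that for some ε>0, E[ξ₁^{α+ε}]<∞, E[ξ₂^{α+ε}]<∞ and E[ξ₁^{α+ε} ξ₂^{α+ε}]<∞. Then for all a>0, b>0, lim_{u→∞} P(ξ₁Z₁ > ua, ξ₂Z₂ > ub)/P(Z>u)² = a^{-α} b^{-α} E[ξ₁^α ξ₂^α]. -/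
/-!
Conditioning on `(ξ₁, ξ₂)`, independence gives
`P(ξ₁ Z₁ > u a, ξ₂ Z₂ > u b) = E[F̄(u a / ξ₁) F̄(u b / ξ₂)]`, where `F̄` is the tail of `Z₁`.
Regular variation of `F̄` gives `F̄(u a / x) / F̄(u) → a^{-α} x^α` pointwise, and Potter's bound
`F̄(z) ≤ 2^p (1 + (u / z)^p) F̄(u)` (for `p > α`, all `z > 0` and all large `u`) dominates the
ratio by a multiple of `(1 + ξ₁^p) (1 + ξ₂^p)`, which is integrable for `p = α + ε`.
Dominated convergence concludes. Potter's bound comes from iterating `F̄(u / 2) ≤ 2^p F̄(u)`,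
and for small `z` from `u^p F̄(u) → ∞`.
-/

open MeasureTheory ProbabilityTheory Filter

noncomputable section

open Set
open scoped Topology

def IsRegularlyVarying (G : ℝ → ℝ) (ρ : ℝ) : Prop :=
  ∀ x > (0:ℝ), Tendsto (fun u => G (u * x) / G u) atTop (𝓝 (x ^ ρ))

theorem SlowlyVarying.isRegularlyVarying_of_eq {ℓ G : ℝ → ℝ} (hℓ : SlowlyVarying ℓ) {ρ : ℝ}
    (hG : ∀ z > 0, G z = z ^ ρ * ℓ z) : IsRegularlyVarying G ρ := by
  obtain ⟨-, hℓpos, hℓlim⟩ := hℓ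
  intro x hx
  have hlim := (hℓlim x hx).const_mul (x ^ ρ)
  rw [mul_one] at hlim
  refine hlim.congr' ?_
  filter_upwards [eventually_gt_atTop 0] with u hu
  have hℓu := (hℓpos u hu).ne'
  have hu_rpow := (Real.rpow_pos_of_pos hu ρ).ne'
  rw [hG _ (mul_pos hu hx), hG u hu, Real.mul_rpow hu.le hx.le]
  field_simp

theorem Antitone.le_two_rpow_mul_div_rpow_mul {G : ℝ → ℝ} (hGa : Antitone G)
    (hG0 : ∀ x, 0 ≤ G x) {q u₀ : ℝ} (hq : 0 ≤ q) (hu₀ : 0 < u₀)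
    (hdbl : ∀ u ≥ u₀, G (u / 2) ≤ 2 ^ q * G u) {z u : ℝ} (hz : u₀ ≤ z) (hzu : z ≤ u) :
    G z ≤ 2 ^ q * (u / z) ^ q * G u := by
  have hz0 : 0 < z := hu₀.trans_le hz
  have h2q : 1 ≤ (2 : ℝ) ^ q := Real.one_le_rpow one_le_two hq
  obtain ⟨n, hn⟩ := pow_unbounded_of_one_lt (u / z) (one_lt_two (α := ℝ))
  rw [div_lt_iff₀ hz0] at hn
  induction n generalizing u with
  | zero =>
    rw [show u = z from le_antisymm (by simpa using hn.le) hzu, div_self hz0.ne',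
      Real.one_rpow, mul_one]
    exact le_mul_of_one_le_left (hG0 z) h2q
  | succ n ih =>
    have hu : u₀ ≤ u := hz.trans hzu
    have huz : 1 ≤ (u / z) ^ q := Real.one_le_rpow ((one_le_div hz0).2 hzu) hq
    rcases le_or_gt u (2 * z) with hu2 | hu2
    · calc G z ≤ G (u / 2) := hGa (by linarith)
        _ ≤ 2 ^ q * G u := hdbl u hu
        _ ≤ 2 ^ q * (u / z) ^ q * G u := by
          rw [mul_assoc]; gcongr; exact le_mul_of_one_le_left (hG0 u) huz
    · have hu2z : 0 ≤ u / 2 / z := div_nonneg (by linarith) hz0.le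
      have hhalf : (u / 2 / z) ^ q * 2 ^ q = (u / z) ^ q := by
        rw [← Real.mul_rpow hu2z zero_le_two]
        congr 1
        field_simp
      calc G z ≤ 2 ^ q * (u / 2 / z) ^ q * G (u / 2) :=
            ih (u := u / 2) (by linarith) (by rw [pow_succ] at hn; linarith)
        _ ≤ 2 ^ q * (u / 2 / z) ^ q * (2 ^ q * G u) := by
          have := Real.rpow_nonneg hu2z q
          gcongr
          exact hdbl u hu
        _ = 2 ^ q * (u / z) ^ q * G u := by rw [← hhalf]; ring

namespace IsRegularlyVarying

variable {G : ℝ → ℝ} {α : ℝ}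

theorem eventually_ne_zero {ρ : ℝ} (hG : IsRegularlyVarying G ρ) : ∀ᶠ u in atTop, G u ≠ 0 := by
  have h1 := hG 1 one_pos
  simp only [mul_one, Real.one_rpow] at h1
  filter_upwards [h1.eventually_ne one_ne_zero] with u hu h
  simp [h] at hu

theorem eventually_half_le_two_rpow_mul (hG : IsRegularlyVarying G (-α)) (hG0 : ∀ x, 0 ≤ G x)
    {q : ℝ} (hq : α < q) : ∀ᶠ u in atTop, G (u / 2) ≤ 2 ^ q * G u := by
  have hlt : (2⁻¹ : ℝ) ^ (-α) < 2 ^ q := by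
    rw [Real.inv_rpow zero_le_two, Real.rpow_neg zero_le_two, inv_inv]
    exact Real.rpow_lt_rpow_of_exponent_lt one_lt_two hq
  filter_upwards [(hG 2⁻¹ (by norm_num)).eventually_lt_const hlt, hG.eventually_ne_zero]
    with u hu hGu
  rw [div_lt_iff₀ ((hG0 u).lt_of_ne' hGu)] at hu
  rw [div_eq_mul_inv]
  exact hu.le

theorem exists_potter_bound (hG : IsRegularlyVarying G (-α)) (hGa : Antitone G)
    (hG0 : ∀ x, 0 ≤ G x) (hα : 0 ≤ α) {q : ℝ} (hq : α < q) :
    ∃ u₀ > 0, ∀ z u, u₀ ≤ z → z ≤ u → G z ≤ 2 ^ q * (u / z) ^ q * G u := by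
  obtain ⟨u₀, hu₀⟩ := eventually_atTop.1 (hG.eventually_half_le_two_rpow_mul hG0 hq)
  refine ⟨max u₀ 1, by positivity, fun z u hz hzu => ?_⟩
  exact hGa.le_two_rpow_mul_div_rpow_mul hG0 (hα.trans hq.le) (by positivity)
    (fun v hv => hu₀ v ((le_max_left _ _).trans hv)) hz hzu

theorem tendsto_rpow_mul_atTop (hG : IsRegularlyVarying G (-α)) (hGa : Antitone G)
    (hG0 : ∀ x, 0 ≤ G x) (hα : 0 ≤ α) {p : ℝ} (hp : α < p) :
    Tendsto (fun u => u ^ p * G u) atTop atTop := by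
  obtain ⟨q, hαq, hqp⟩ := exists_between hp
  obtain ⟨u₀, hu₀, hpot⟩ := hG.exists_potter_bound hGa hG0 hα hαq
  obtain ⟨u₁, hu₁, hGu₁⟩ := ((eventually_ge_atTop u₀).and hG.eventually_ne_zero).exists
  have hu₁0 : 0 < u₁ := hu₀.trans_le hu₁
  set D := G u₁ * u₁ ^ q / 2 ^ q
  have hD : 0 < D := by have := (hG0 u₁).lt_of_ne' hGu₁; positivity
  refine tendsto_atTop_mono' _ ?_
    ((tendsto_rpow_atTop (by linarith : 0 < p - q)).const_mul_atTop hD)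
  filter_upwards [eventually_ge_atTop u₁] with u hu
  have hu0 : 0 < u := hu₁0.trans_le hu
  have h := hpot u₁ u hu₁ hu
  rw [Real.div_rpow hu0.le hu₁0.le] at h
  have hD_le : D ≤ u ^ q * G u := by
    rw [div_le_iff₀ (by positivity), ← le_div_iff₀ (Real.rpow_pos_of_pos hu₁0 q)]
    calc G u₁ ≤ 2 ^ q * (u ^ q / u₁ ^ q) * G u := h
      _ = u ^ q * G u * 2 ^ q / u₁ ^ q := by ring
  calc D * u ^ (p - q) ≤ u ^ q * G u * u ^ (p - q) := by gcongr
    _ = u ^ p * G u := by rw [mul_right_comm, ← Real.rpow_add hu0]; ring_nf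

theorem eventually_le_two_rpow_mul_one_add_rpow (hG : IsRegularlyVarying G (-α))
    (hGa : Antitone G) (hG0 : ∀ x, 0 ≤ G x) (hα : 0 ≤ α) {M : ℝ} (hGM : ∀ x, G x ≤ M) {p : ℝ}
    (hp : α < p) : ∀ᶠ u in atTop, ∀ z > 0, G z ≤ 2 ^ p * (1 + (u / z) ^ p) * G u := by
  obtain ⟨u₀, hu₀, hpot⟩ := hG.exists_potter_bound hGa hG0 hα hp
  filter_upwards [(hG.tendsto_rpow_mul_atTop hGa hG0 hα hp).eventually_ge_atTop (M * u₀ ^ p),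
    eventually_ge_atTop u₀] with u hMu hu z hz
  have hu0 : 0 < u := hu₀.trans_le hu
  have hp0 : 0 ≤ p := hα.trans hp.le
  have h2p : 1 ≤ (2 : ℝ) ^ p := Real.one_le_rpow one_le_two hp0
  have huz : 0 ≤ (u / z) ^ p := by positivity
  rcases le_total u z with huz' | hzu
  · calc G z ≤ 1 * 1 * G u := by rw [one_mul, one_mul]; exact hGa huz'
      _ ≤ 2 ^ p * (1 + (u / z) ^ p) * G u := by
        gcongr
        · exact hG0 u
        · linarith
  rcases le_total u₀ z with hz₀ | hz₀
  · calc G z ≤ 2 ^ p * (u / z) ^ p * G u := hpot z u hz₀ hzu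
      _ ≤ 2 ^ p * (1 + (u / z) ^ p) * G u := by gcongr; exact hG0 u; linarith
  · calc G z ≤ M := hGM z
      _ ≤ (u / u₀) ^ p * G u := by
        rw [Real.div_rpow hu0.le hu₀.le, div_mul_eq_mul_div, le_div_iff₀ (by positivity)]
        exact hMu
      _ ≤ 1 * (u / z) ^ p * G u := by
        rw [one_mul]; gcongr; exact hG0 u
      _ ≤ 2 ^ p * (1 + (u / z) ^ p) * G u := by gcongr; exact hG0 u; linarith

end IsRegularlyVarying

section Independence

variable {Ω E F : Type*} [MeasurableSpace Ω] [MeasurableSpace E] [MeasurableSpace F]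
  {P : Measure Ω} [IsFiniteMeasure P] {X₁ X₂ : Ω → E} {Y₁ Y₂ : Ω → F} {A B : Set (E × F)}

theorem measure_mem_and_mem_eq_lintegral (hX₁ : AEMeasurable X₁ P) (hX₂ : AEMeasurable X₂ P)
    (hY₁ : AEMeasurable Y₁ P) (hY₂ : AEMeasurable Y₂ P)
    (hXY : IndepFun (fun ω => (X₁ ω, X₂ ω)) (fun ω => (Y₁ ω, Y₂ ω)) P) (hY : IndepFun Y₁ Y₂ P)
    (hA : MeasurableSet A) (hB : MeasurableSet B) :
    P {ω | (X₁ ω, Y₁ ω) ∈ A ∧ (X₂ ω, Y₂ ω) ∈ B} =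
      ∫⁻ ω, P.map Y₁ (Prod.mk (X₁ ω) ⁻¹' A) * P.map Y₂ (Prod.mk (X₂ ω) ⁻¹' B) ∂P := by
  set S : Set ((E × E) × F × F) := {w | (w.1.1, w.2.1) ∈ A ∧ (w.1.2, w.2.2) ∈ B}
  have hS : MeasurableSet S := (hA.preimage (by fun_prop)).inter (hB.preimage (by fun_prop))
  have hX := hX₁.prodMk hX₂
  have hlaw : P.map (fun ω => ((X₁ ω, X₂ ω), (Y₁ ω, Y₂ ω)))
      = (P.map fun ω => (X₁ ω, X₂ ω)).prod ((P.map Y₁).prod (P.map Y₂)) := by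
    rw [(indepFun_iff_map_prod_eq_prod_map_map hX (hY₁.prodMk hY₂)).1 hXY,
      (indepFun_iff_map_prod_eq_prod_map_map hY₁ hY₂).1 hY]
  have hsection (x : E × E) :
      Prod.mk x ⁻¹' S = (Prod.mk x.1 ⁻¹' A) ×ˢ (Prod.mk x.2 ⁻¹' B) := rfl
  calc P {ω | (X₁ ω, Y₁ ω) ∈ A ∧ (X₂ ω, Y₂ ω) ∈ B}
      = P.map (fun ω => ((X₁ ω, X₂ ω), (Y₁ ω, Y₂ ω))) S :=
        (Measure.map_apply_of_aemeasurable (hX.prodMk (hY₁.prodMk hY₂)) hS).symm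
    _ = ∫⁻ x, P.map Y₁ (Prod.mk x.1 ⁻¹' A) * P.map Y₂ (Prod.mk x.2 ⁻¹' B)
          ∂(P.map fun ω => (X₁ ω, X₂ ω)) := by
        simp only [hlaw, Measure.prod_apply hS, hsection, Measure.prod_prod]
    _ = _ := by
        refine lintegral_map' (Measurable.aemeasurable ?_) hX
        exact ((measurable_measure_prodMk_left hA).comp measurable_fst).mul
          ((measurable_measure_prodMk_left hB).comp measurable_snd)

theorem measure_mem_and_mem_toReal_eq_integral (hX₁ : AEMeasurable X₁ P)
    (hX₂ : AEMeasurable X₂ P) (hY₁ : AEMeasurable Y₁ P) (hY₂ : AEMeasurable Y₂ P)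
    (hXY : IndepFun (fun ω => (X₁ ω, X₂ ω)) (fun ω => (Y₁ ω, Y₂ ω)) P) (hY : IndepFun Y₁ Y₂ P)
    (hA : MeasurableSet A) (hB : MeasurableSet B) :
    (P {ω | (X₁ ω, Y₁ ω) ∈ A ∧ (X₂ ω, Y₂ ω) ∈ B}).toReal =
      ∫ ω, (P.map Y₁ (Prod.mk (X₁ ω) ⁻¹' A)).toReal *
        (P.map Y₂ (Prod.mk (X₂ ω) ⁻¹' B)).toReal ∂P := by
  rw [measure_mem_and_mem_eq_lintegral hX₁ hX₂ hY₁ hY₂ hXY hY hA hB, ← integral_toReal]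
  · simp only [ENNReal.toReal_mul]
  · exact ((measurable_measure_prodMk_left hA).comp_aemeasurable hX₁).mul
      ((measurable_measure_prodMk_left hB).comp_aemeasurable hX₂)
  · exact ae_of_all _ fun ω => ENNReal.mul_lt_top (measure_lt_top _ _) (measure_lt_top _ _)

end Independence

section TailOfProduct

variable {μ : Measure ℝ} {α : ℝ}

theorem antitone_measure_Ioi_toReal [IsFiniteMeasure μ] :
    Antitone fun z => (μ (Ioi z)).toReal :=
  fun _ _ hzw => ENNReal.toReal_mono (measure_ne_top _ _) (measure_mono (Ioi_subset_Ioi hzw))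

theorem measurableSet_lt_mul (s : ℝ) : MeasurableSet {w : ℝ × ℝ | s < w.1 * w.2} :=
  measurableSet_lt measurable_const measurable_mul

theorem measurable_measure_lt_mul [SFinite μ] (s : ℝ) :
    Measurable fun x => μ {z | s < x * z} :=
  measurable_measure_prodMk_left (measurableSet_lt_mul s)

theorem setOf_lt_mul_eq_Ioi {s x : ℝ} (hx : 0 < x) : {z : ℝ | s < x * z} = Ioi (s / x) := by
  ext z
  rw [mem_ofPred_eq, mem_Ioi, div_lt_iff₀' hx]

theorem setOf_lt_zero_mul_eq_empty {s : ℝ} (hs : 0 ≤ s) : {z : ℝ | s < 0 * z} = ∅ := by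
  ext z
  simp [not_lt.2 hs]

theorem tendsto_measure_lt_mul_div_measure_Ioi
    (hμ : IsRegularlyVarying (fun z => (μ (Ioi z)).toReal) (-α)) (hα : 0 < α) {c x : ℝ}
    (hc : 0 < c) (hx : 0 ≤ x) :
    Tendsto (fun u => (μ {z | u * c < x * z}).toReal / (μ (Ioi u)).toReal) atTop
      (𝓝 (c ^ (-α) * x ^ α)) := by
  rcases hx.eq_or_lt with rfl | hx
  · rw [Real.zero_rpow hα.ne', mul_zero]
    refine tendsto_const_nhds.congr' ?_
    filter_upwards [eventually_gt_atTop 0] with u hu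
    rw [setOf_lt_zero_mul_eq_empty (by positivity), measure_empty, ENNReal.toReal_zero,
      zero_div]
  · have hlim : (c / x) ^ (-α) = c ^ (-α) * x ^ α := by
      rw [Real.div_rpow hc.le hx.le, Real.rpow_neg hx.le, div_inv_eq_mul]
    rw [← hlim]
    refine (hμ (c / x) (by positivity)).congr fun u => ?_
    rw [setOf_lt_mul_eq_Ioi hx, mul_div_assoc]

theorem eventually_measure_lt_mul_div_measure_Ioi_le [IsFiniteMeasure μ]
    (hμ : IsRegularlyVarying (fun z => (μ (Ioi z)).toReal) (-α)) (hα : 0 ≤ α) {p c : ℝ}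
    (hp : α < p) (hc : 0 < c) :
    ∀ᶠ u in atTop, ∀ x ≥ 0,
      (μ {z | u * c < x * z}).toReal / (μ (Ioi u)).toReal ≤ 2 ^ p * (1 + (x / c) ^ p) := by
  filter_upwards [hμ.eventually_le_two_rpow_mul_one_add_rpow antitone_measure_Ioi_toReal
      (fun _ => ENNReal.toReal_nonneg) hα
      (fun _ => ENNReal.toReal_mono (measure_ne_top _ _) (measure_mono (subset_univ _))) hp,
    hμ.eventually_ne_zero, eventually_gt_atTop 0] with u hpot hGu hu x hx
  have hGu' : 0 < (μ (Ioi u)).toReal := ENNReal.toReal_nonneg.lt_of_ne' hGu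
  rw [div_le_iff₀ hGu']
  rcases hx.eq_or_lt with rfl | hx
  · rw [setOf_lt_zero_mul_eq_empty (by positivity), measure_empty, ENNReal.toReal_zero]
    positivity
  · rw [setOf_lt_mul_eq_Ioi hx]
    have h := hpot (u * c / x) (by positivity)
    rwa [show u / (u * c / x) = x / c by field_simp] at h

end TailOfProduct

theorem integrable_two_rpow_mul_one_add_div_rpow_mul {Ω : Type*} [MeasurableSpace Ω]
    {P : Measure Ω} [IsFiniteMeasure P] {ξ₁ ξ₂ : Ω → ℝ} {p a b : ℝ} (hξ₁0 : ∀ ω, 0 ≤ ξ₁ ω)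
    (hξ₂0 : ∀ ω, 0 ≤ ξ₂ ω) (hm₁ : Integrable (fun ω => ξ₁ ω ^ p) P)
    (hm₂ : Integrable (fun ω => ξ₂ ω ^ p) P)
    (hm₁₂ : Integrable (fun ω => ξ₁ ω ^ p * ξ₂ ω ^ p) P) (ha : 0 ≤ a) (hb : 0 ≤ b) :
    Integrable (fun ω => 2 ^ p * (1 + (ξ₁ ω / a) ^ p) * (2 ^ p * (1 + (ξ₂ ω / b) ^ p))) P := by
  have h : (fun ω => 2 ^ p * (1 + (ξ₁ ω / a) ^ p) * (2 ^ p * (1 + (ξ₂ ω / b) ^ p))) =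
      fun ω => 2 ^ p * 2 ^ p * (1 + ξ₁ ω ^ p / a ^ p + ξ₂ ω ^ p / b ^ p +
        ξ₁ ω ^ p * ξ₂ ω ^ p / (a ^ p * b ^ p)) := by
    funext ω
    rw [Real.div_rpow (hξ₁0 ω) ha, Real.div_rpow (hξ₂0 ω) hb]
    ring
  rw [h]
  exact ((((integrable_const 1).add (hm₁.div_const _)).add (hm₂.div_const _)).add
    (hm₁₂.div_const _)).const_mul _

theorem tendsto_integral_measure_lt_mul_mul_div_sq {Ω : Type*} [MeasurableSpace Ω]
    {P : Measure Ω} [IsFiniteMeasure P] {μ : Measure ℝ} [IsFiniteMeasure μ] {α p : ℝ}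
    (hμ : IsRegularlyVarying (fun z => (μ (Ioi z)).toReal) (-α)) (hα : 0 < α) (hp : α < p)
    {ξ₁ ξ₂ : Ω → ℝ} (hξ₁ : Measurable ξ₁) (hξ₂ : Measurable ξ₂) (hξ₁0 : ∀ ω, 0 ≤ ξ₁ ω)
    (hξ₂0 : ∀ ω, 0 ≤ ξ₂ ω) (hm₁ : Integrable (fun ω => ξ₁ ω ^ p) P)
    (hm₂ : Integrable (fun ω => ξ₂ ω ^ p) P)
    (hm₁₂ : Integrable (fun ω => ξ₁ ω ^ p * ξ₂ ω ^ p) P) {a b : ℝ} (ha : 0 < a) (hb : 0 < b) :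
    Tendsto (fun u => (∫ ω, (μ {z | u * a < ξ₁ ω * z}).toReal *
        (μ {z | u * b < ξ₂ ω * z}).toReal ∂P) / (μ (Ioi u)).toReal ^ 2) atTop
      (𝓝 (a ^ (-α) * b ^ (-α) * ∫ ω, ξ₁ ω ^ α * ξ₂ ω ^ α ∂P)) := by
  set G := fun u => (μ (Ioi u)).toReal
  have hdom := tendsto_integral_filter_of_dominated_convergence _
    (F := fun u ω => (μ {z | u * a < ξ₁ ω * z}).toReal / G u *
      ((μ {z | u * b < ξ₂ ω * z}).toReal / G u))
    (f := fun ω => a ^ (-α) * ξ₁ ω ^ α * (b ^ (-α) * ξ₂ ω ^ α))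
    (Eventually.of_forall fun u => Measurable.aestronglyMeasurable <|
      ((((measurable_measure_lt_mul _).comp hξ₁).ennreal_toReal).div_const _).mul
        ((((measurable_measure_lt_mul _).comp hξ₂).ennreal_toReal).div_const _))
    (by
      filter_upwards [eventually_measure_lt_mul_div_measure_Ioi_le hμ hα.le hp ha,
        eventually_measure_lt_mul_div_measure_Ioi_le hμ hα.le hp hb] with u h₁ h₂
      refine ae_of_all _ fun ω => ?_
      have h₁0 : 0 ≤ (μ {z | u * a < ξ₁ ω * z}).toReal / G u := by positivity
      have h₂0 : 0 ≤ (μ {z | u * b < ξ₂ ω * z}).toReal / G u := by positivity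
      rw [Real.norm_of_nonneg (mul_nonneg h₁0 h₂0)]
      exact mul_le_mul (h₁ _ (hξ₁0 ω)) (h₂ _ (hξ₂0 ω)) h₂0 (h₁0.trans (h₁ _ (hξ₁0 ω))))
    (integrable_two_rpow_mul_one_add_div_rpow_mul hξ₁0 hξ₂0 hm₁ hm₂ hm₁₂ ha.le hb.le)
    (ae_of_all _ fun ω => (tendsto_measure_lt_mul_div_measure_Ioi hμ hα ha (hξ₁0 ω)).mul
      (tendsto_measure_lt_mul_div_measure_Ioi hμ hα hb (hξ₂0 ω)))
  have hlimit : ∫ ω, a ^ (-α) * ξ₁ ω ^ α * (b ^ (-α) * ξ₂ ω ^ α) ∂P =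
      a ^ (-α) * b ^ (-α) * ∫ ω, ξ₁ ω ^ α * ξ₂ ω ^ α ∂P := by
    rw [← integral_const_mul]
    congr 1 with ω
    ring
  rw [← hlimit]
  refine hdom.congr fun u => ?_
  rw [← integral_div]
  congr 1 with ω
  ring

theorem stmt_2_general {Ω : Type*} [MeasurableSpace Ω] (P : Measure Ω) [IsProbabilityMeasure P]
    (α : ℝ) (hα : 0 < α)
    (Z₁ Z₂ : Ω → ℝ)
    (hZindep : IndepFun Z₁ Z₂ P) (hZid : IdentDistrib Z₁ Z₂ P P)
    (ℓ : ℝ → ℝ) (hℓ : SlowlyVarying ℓ)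
    (htail : ∀ z > (0:ℝ), (P {ω | Z₁ ω > z}).toReal = z ^ (-α) * ℓ z)
    (ξ₁ ξ₂ : Ω → ℝ) (hξ₁meas : Measurable ξ₁) (hξ₂meas : Measurable ξ₂)
    (hξ₁nn : ∀ ω, 0 ≤ ξ₁ ω) (hξ₂nn : ∀ ω, 0 ≤ ξ₂ ω)
    (hindep : IndepFun (fun ω => (ξ₁ ω, ξ₂ ω)) (fun ω => (Z₁ ω, Z₂ ω)) P)
    (ε : ℝ) (hε : 0 < ε)
    (hmom₁ : Integrable (fun ω => ξ₁ ω ^ (α + ε)) P)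
    (hmom₂ : Integrable (fun ω => ξ₂ ω ^ (α + ε)) P)
    (hmom₁₂ : Integrable (fun ω => ξ₁ ω ^ (α + ε) * ξ₂ ω ^ (α + ε)) P) :
    ∀ a > (0:ℝ), ∀ b > (0:ℝ),
      Tendsto
        (fun u : ℝ =>
          (P {ω | ξ₁ ω * Z₁ ω > u * a ∧ ξ₂ ω * Z₂ ω > u * b}).toReal
            / ((P {ω | Z₁ ω > u}).toReal) ^ 2)
        atTop
        (nhds (a ^ (-α) * b ^ (-α) * ∫ ω, ξ₁ ω ^ α * ξ₂ ω ^ α ∂P)) := by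
  intro a ha b hb
  have hZ₁ := hZid.aemeasurable_fst
  set μ := P.map Z₁
  have htail_μ (z : ℝ) : (P {ω | Z₁ ω > z}).toReal = (μ (Ioi z)).toReal := by
    rw [Measure.map_apply_of_aemeasurable hZ₁ measurableSet_Ioi]
    rfl
  have hμ : IsRegularlyVarying (fun z => (μ (Ioi z)).toReal) (-α) :=
    hℓ.isRegularlyVarying_of_eq fun z hz => by rw [← htail_μ, htail z hz]
  have hjoint (s t : ℝ) : (P {ω | ξ₁ ω * Z₁ ω > s ∧ ξ₂ ω * Z₂ ω > t}).toReal =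
      ∫ ω, (μ {z | s < ξ₁ ω * z}).toReal * (μ {z | t < ξ₂ ω * z}).toReal ∂P := by
    have h := measure_mem_and_mem_toReal_eq_integral hξ₁meas.aemeasurable
      hξ₂meas.aemeasurable hZ₁ hZid.aemeasurable_snd hindep hZindep
      (measurableSet_lt_mul s) (measurableSet_lt_mul t)
    rw [← hZid.map_eq] at h
    exact h
  simp_rw [hjoint, htail_μ]
  exact tendsto_integral_measure_lt_mul_mul_div_sq hμ hα (lt_add_of_pos_right α hε) hξ₁meas
    hξ₂meas hξ₁nn hξ₂nn hmom₁ hmom₂ hmom₁₂ ha hb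

/-- Bivariate Breiman lemma: for i.i.d. `Z₁, Z₂` with common regularly varying tail of
index `-α`, and a pair `(ξ₁, ξ₂)` of nonnegative r.v.'s independent of `(Z₁, Z₂)` with
suitable moments, `P(ξ₁Z₁ > ua, ξ₂Z₂ > ub)/P(Z > u)² → a^{-α} b^{-α} E[ξ₁^α ξ₂^α]`. -/
theorem stmt_2 {Ω : Type*} [MeasurableSpace Ω] (P : Measure Ω) [IsProbabilityMeasure P]
    (α : ℝ) (hα : 0 < α)
    (Z₁ Z₂ : Ω → ℝ) (hZ₁meas : Measurable Z₁) (hZ₂meas : Measurable Z₂)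
    (hZ₁nn : ∀ ω, 0 ≤ Z₁ ω) (hZ₂nn : ∀ ω, 0 ≤ Z₂ ω)
    (hZindep : IndepFun Z₁ Z₂ P) (hZid : IdentDistrib Z₁ Z₂ P P)
    (ℓ : ℝ → ℝ) (hℓ : SlowlyVarying ℓ)
    (htail : ∀ z > (0:ℝ), (P {ω | Z₁ ω > z}).toReal = z ^ (-α) * ℓ z)
    (ξ₁ ξ₂ : Ω → ℝ) (hξ₁meas : Measurable ξ₁) (hξ₂meas : Measurable ξ₂)
    (hξ₁nn : ∀ ω, 0 ≤ ξ₁ ω) (hξ₂nn : ∀ ω, 0 ≤ ξ₂ ω)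
    (hindep : IndepFun (fun ω => (ξ₁ ω, ξ₂ ω)) (fun ω => (Z₁ ω, Z₂ ω)) P)
    (ε : ℝ) (hε : 0 < ε)
    (hmom₁ : Integrable (fun ω => ξ₁ ω ^ (α + ε)) P)
    (hmom₂ : Integrable (fun ω => ξ₂ ω ^ (α + ε)) P)
    (hmom₁₂ : Integrable (fun ω => ξ₁ ω ^ (α + ε) * ξ₂ ω ^ (α + ε)) P) :
    ∀ a > (0:ℝ), ∀ b > (0:ℝ),
      Tendsto
        (fun u : ℝ =>
          (P {ω | ξ₁ ω * Z₁ ω > u * a ∧ ξ₂ ω * Z₂ ω > u * b}).toReal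
            / ((P {ω | Z₁ ω > u}).toReal) ^ 2)
        atTop
        (nhds (a ^ (-α) * b ^ (-α) * ∫ ω, ξ₁ ω ^ α * ξ₂ ω ^ α ∂P)) :=
  stmt_2_general P α hα Z₁ Z₂ hZindep hZid ℓ hℓ htail ξ₁ ξ₂ hξ₁meas hξ₂meas hξ₁nn hξ₂nn hindep ε hε
    hmom₁ hmom₂ hmom₁₂
end
end
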